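/- arXiv:1412.1050 — 5 statements merged into one kernel-verified Lean document; each statement's English description precedes it below -/
import Mathlib

section
/- If μ is a signed Borel measure on ℝ with support bounded below, distribution function satisfying 0 ≤ μ(x) ≤ 1, and additionally lim_{y→∞} (1/y)∫_{-∞}^{y} μ(x) dx = 1, then lim_{x→0^+} ∫_{-∞}^{∞} x e^{-λx} μ(λ) dλ = 1, i.e. f_μ(0^+) = 1. -/
/-!
Write `F λ = μ (-∞, λ]` and `G y = ∫_{-∞}^y F`. Fubini turns `∫ x e^{-λx} F(λ) dλ` into
`∫ e^{-t} · x G(t/x) dt`. From `0 ≤ F ≤ 1_{(a,∞)}` we get `0 ≤ x G(t/x) ≤ max (t - a x) 0`, a bound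
uniform in `x ∈ (0,1)` with integrable majorant `e^{-t} max (t + |a|) 0`; and `x G(t/x) → max t 0`
as `x → 0⁺`: for `t > 0` this is (H3), for `t < 0` the argument `t/x` eventually lies below `a`,
where `G` vanishes. Dominated convergence gives the limit `∫ e^{-t} max t 0 dt = Γ(2) = 1`.
-/

open MeasureTheory Set Filter Topology Real

lemma MeasureTheory.SignedMeasure.measurable_apply_Iic (μ : SignedMeasure ℝ) :
    Measurable fun l => μ (Iic l) := by
  have hmono (ν : Measure ℝ) [IsFiniteMeasure ν] : Monotone fun l => ν.real (Iic l) :=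
    fun _ _ h => measureReal_mono (Iic_subset_Iic.2 h)
  have h (l : ℝ) : μ (Iic l) = μ.toJordanDecomposition.posPart.real (Iic l)
      - μ.toJordanDecomposition.negPart.real (Iic l) := by
    conv_lhs => rw [← μ.toSignedMeasure_toJordanDecomposition]
    exact Measure.toSignedMeasure_sub_apply measurableSet_Iic
  simp_rw [h]
  exact (hmono _).measurable.sub (hmono _).measurable

lemma integrableOn_exp_neg_Ici (c : ℝ) : IntegrableOn (fun t => exp (-t)) (Ici c) := by
  rw [integrableOn_Ici_iff_integrableOn_Ioi]
  simpa using exp_neg_integrableOn_Ioi c one_pos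

lemma exp_neg_mul_max_zero_eq_indicator :
    (fun t => exp (-t) * max t 0) = (Ioi 0).indicator fun t => exp (-t) * t := by
  ext t
  rcases le_or_gt t 0 with ht | ht
  · simp [ht]
  · simp [ht, ht.le]

lemma integrable_exp_neg_mul_max_add (c : ℝ) :
    Integrable fun t => exp (-t) * max (t + c) 0 := by
  have h0 : Integrable fun t => exp (-t) * max t 0 := by
    rw [exp_neg_mul_max_zero_eq_indicator, integrable_indicator_iff measurableSet_Ioi]
    have := GammaIntegral_convergent (s := 2) two_pos
    norm_num at this
    exact this
  refine ((h0.comp_add_right c).const_mul (exp c)).congr (ae_of_all _ fun t => ?_)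
  simp only [neg_add, exp_add, exp_neg]
  field_simp

lemma integral_exp_neg_mul_max_zero : ∫ t, exp (-t) * max t 0 = 1 := by
  rw [exp_neg_mul_max_zero_eq_indicator, integral_indicator measurableSet_Ioi]
  have := Gamma_eq_integral (s := 2) two_pos
  norm_num [Gamma_two] at this
  exact this.symm

lemma integrableOn_Iic_indicator_Ioi_one (a y : ℝ) :
    IntegrableOn ((Ioi a).indicator (1 : ℝ → ℝ)) (Iic y) := by
  rw [IntegrableOn, integrable_indicator_iff measurableSet_Ioi, IntegrableOn,
    Measure.restrict_restrict measurableSet_Ioi, Ioi_inter_Iic]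
  exact integrableOn_const measure_Ioc_lt_top.ne

lemma setIntegral_Iic_indicator_Ioi_one (a y : ℝ) :
    ∫ l in Iic y, (Ioi a).indicator (1 : ℝ → ℝ) l = max (y - a) 0 := by
  rw [integral_indicator_one measurableSet_Ioi, measureReal_restrict_apply measurableSet_Ioi,
    Ioi_inter_Iic, Real.volume_real_Ioc]

section DistributionFunction

variable {F : ℝ → ℝ} {a : ℝ}

lemma integrableOn_Iic_of_le_indicator_Ioi (hFm : Measurable F) (hFnn : ∀ l, 0 ≤ F l)
    (hFle : ∀ l, F l ≤ (Ioi a).indicator 1 l) (y : ℝ) : IntegrableOn F (Iic y) :=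
  (integrableOn_Iic_indicator_Ioi_one a y).mono' hFm.aestronglyMeasurable
    (ae_of_all _ fun l => (norm_of_nonneg (hFnn l)).trans_le (hFle l))

lemma setIntegral_Iic_le_max (hFm : Measurable F) (hFnn : ∀ l, 0 ≤ F l)
    (hFle : ∀ l, F l ≤ (Ioi a).indicator 1 l) (y : ℝ) :
    ∫ l in Iic y, F l ≤ max (y - a) 0 :=
  (setIntegral_mono (integrableOn_Iic_of_le_indicator_Ioi hFm hFnn hFle y)
    (integrableOn_Iic_indicator_Ioi_one a y) hFle).trans_eq
    (setIntegral_Iic_indicator_Ioi_one a y)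

lemma integrable_mul_exp_neg_mul (hFm : Measurable F) (hFnn : ∀ l, 0 ≤ F l)
    (hFle : ∀ l, F l ≤ (Ioi a).indicator 1 l) {x : ℝ} (hx : 0 < x) :
    Integrable fun l => x * F l * exp (-(l * x)) := by
  have hexp : Integrable ((Ioi a).indicator fun l => x * exp (-x * l)) :=
    IntegrableOn.integrable_indicator ((exp_neg_integrableOn_Ioi a hx).const_mul x)
      measurableSet_Ioi
  refine hexp.mono' (by fun_prop) (ae_of_all _ fun l => ?_)
  rw [norm_of_nonneg (by have := hFnn l; positivity)]
  have := hFle l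
  by_cases hl : l ∈ Ioi a
  · simp only [indicator_of_mem hl, Pi.one_apply] at this ⊢
    rw [mul_comm l x, ← neg_mul]
    nlinarith [mul_pos hx (exp_pos (-x * l))]
  · simp only [indicator_of_notMem hl] at this ⊢
    rw [le_antisymm this (hFnn l)]
    simp

lemma integral_mul_exp_neg_mul_eq_integral_exp_neg_mul_setIntegral (hFm : Measurable F)
    (hFnn : ∀ l, 0 ≤ F l) (hFle : ∀ l, F l ≤ (Ioi a).indicator 1 l) {x : ℝ} (hx : 0 < x) :
    ∫ l, x * exp (-l * x) * F l = ∫ t, exp (-t) * (x * ∫ l in Iic (t / x), F l) := by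
  set f : ℝ × ℝ → ℝ := {p | p.1 * x ≤ p.2}.indicator fun p => x * F p.1 * exp (-p.2) with hf
  have hf_l (l : ℝ) :
      (fun t => f (l, t)) = (Ici (l * x)).indicator fun t => x * F l * exp (-t) := by
    ext t; simp [hf, indicator_apply]
  have hf_t (t : ℝ) :
      (fun l => f (l, t)) = (Iic (t / x)).indicator fun l => x * F l * exp (-t) := by
    ext l; simp [hf, indicator_apply, le_div_iff₀ hx]
  have hint_t (l : ℝ) : ∫ t, f (l, t) = x * F l * exp (-(l * x)) := by
    rw [hf_l, integral_indicator measurableSet_Ici, integral_const_mul,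
      integral_Ici_eq_integral_Ioi, integral_exp_neg_Ioi]
  have hint_l (t : ℝ) : ∫ l, f (l, t) = exp (-t) * (x * ∫ l in Iic (t / x), F l) := by
    rw [hf_t, integral_indicator measurableSet_Iic, integral_mul_const, integral_const_mul]
    ring
  have hf_int : Integrable f (volume.prod volume) := by
    have hfm : Measurable f := by
      refine Measurable.indicator (by fun_prop)
        (measurableSet_le (measurable_fst.mul_const x) measurable_snd)
    refine (integrable_prod_iff hfm.aestronglyMeasurable).2 ⟨ae_of_all _ fun l => ?_, ?_⟩
    · rw [hf_l, integrable_indicator_iff measurableSet_Ici]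
      exact (integrableOn_exp_neg_Ici _).const_mul _
    · have hf_nn (p : ℝ × ℝ) : 0 ≤ f p :=
        indicator_nonneg (fun p _ => by have := hFnn p.1; positivity) p
      simp_rw [norm_of_nonneg (hf_nn _), hint_t]
      exact integrable_mul_exp_neg_mul hFm hFnn hFle hx
  calc ∫ l, x * exp (-l * x) * F l = ∫ l, ∫ t, f (l, t) := by
        simp_rw [hint_t]; congr 1; ext l; ring_nf
    _ = ∫ t, ∫ l, f (l, t) := integral_integral_swap (f := fun l t => f (l, t)) hf_int
    _ = _ := by simp_rw [hint_l]

end DistributionFunction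

section Abelian

variable {G : ℝ → ℝ} {a : ℝ}

lemma tendsto_mul_apply_div_nhdsGT_zero (hG0 : ∀ y, 0 ≤ G y) (hGle : ∀ y, G y ≤ max (y - a) 0)
    (hG : Tendsto (fun y => 1 / y * G y) atTop (𝓝 1)) (t : ℝ) :
    Tendsto (fun x => x * G (t / x)) (𝓝[>] 0) (𝓝 (max t 0)) := by
  rcases lt_trichotomy t 0 with ht | rfl | ht
  · have hbot : Tendsto (fun x => t / x) (𝓝[>] 0) atBot := by
      simpa [div_eq_mul_inv] using tendsto_inv_nhdsGT_zero.const_mul_atTop_of_neg ht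
    rw [max_eq_right ht.le]
    refine tendsto_const_nhds.congr' ?_
    filter_upwards [hbot.eventually_le_atBot a] with x hx
    have : G (t / x) = 0 := le_antisymm ((hGle _).trans_eq (max_eq_right (by linarith))) (hG0 _)
    rw [this, mul_zero]
  · simpa using ((tendsto_id (x := 𝓝 (0 : ℝ))).mul_const (G 0)).mono_left nhdsWithin_le_nhds
  · have htop : Tendsto (fun x => t / x) (𝓝[>] 0) atTop := by
      simpa [div_eq_mul_inv] using tendsto_inv_nhdsGT_zero.const_mul_atTop ht
    rw [max_eq_left ht.le]
    refine (mul_one t ▸ (hG.comp htop).const_mul t).congr' ?_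
    filter_upwards [self_mem_nhdsWithin] with x (hx : 0 < x)
    simp only [Function.comp]
    field_simp

lemma tendsto_integral_exp_neg_mul_mul_apply_div (hGm : Measurable G) (hG0 : ∀ y, 0 ≤ G y)
    (hGle : ∀ y, G y ≤ max (y - a) 0) (hG : Tendsto (fun y => 1 / y * G y) atTop (𝓝 1)) :
    Tendsto (fun x => ∫ t, exp (-t) * (x * G (t / x))) (𝓝[>] 0) (𝓝 1) := by
  have hbound {x : ℝ} (hx : x ∈ Ioo 0 1) (t : ℝ) : x * G (t / x) ≤ max (t + |a|) 0 :=
    calc x * G (t / x) ≤ x * max (t / x - a) 0 := by gcongr; exacts [hx.1.le, hGle _]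
      _ = max (t - a * x) 0 := by
        rw [mul_max_of_nonneg _ _ hx.1.le, mul_zero, mul_sub, mul_div_cancel₀ _ hx.1.ne', mul_comm]
      _ ≤ max (t + |a|) 0 := by gcongr; nlinarith [neg_abs_le a, abs_nonneg a, hx.1, hx.2]
  rw [← integral_exp_neg_mul_max_zero]
  refine tendsto_integral_filter_of_dominated_convergence _
    (Eventually.of_forall fun x => by fun_prop) ?_ (integrable_exp_neg_mul_max_add |a|)
    (ae_of_all _ fun t => (tendsto_mul_apply_div_nhdsGT_zero hG0 hGle hG t).const_mul _)
  filter_upwards [Ioo_mem_nhdsGT one_pos] with x hx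
  refine ae_of_all _ fun t => ?_
  rw [norm_of_nonneg (by have := hG0 (t / x); have := hx.1; positivity)]
  exact mul_le_mul_of_nonneg_left (hbound hx t) (exp_pos _).le

end Abelian

/-- If `μ` is a signed Borel measure on `ℝ` with support contained in
`(a,∞)`, distribution function `μ(x) = μ((-∞,x]) ∈ [0,1]`, and average value condition
`lim_{y→∞} y⁻¹ ∫_{-∞}^y μ(x) dx = 1`, then
`lim_{x→0⁺} ∫ x e^{-λx} μ(λ) dλ = 1`, i.e. `f_μ(0⁺) = 1`. -/
theorem stmt1 (μ : MeasureTheory.SignedMeasure ℝ) (a : ℝ)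
    (hsupp : ∀ s : Set ℝ, MeasurableSet s → s ⊆ Set.Iic a → μ s = 0)
    (hdist : ∀ x : ℝ, 0 ≤ μ (Set.Iic x) ∧ μ (Set.Iic x) ≤ 1)
    (hH3 : Filter.Tendsto (fun y : ℝ => (1 / y) * ∫ x in Set.Iic y, μ (Set.Iic x))
      Filter.atTop (nhds 1)) :
    Filter.Tendsto (fun x : ℝ => ∫ lam : ℝ, x * Real.exp (-lam * x) * μ (Set.Iic lam))
      (nhdsWithin 0 (Set.Ioi 0)) (nhds 1) := by
  set F : ℝ → ℝ := fun l => μ (Iic l)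
  have hFm : Measurable F := μ.measurable_apply_Iic
  have hFnn (l : ℝ) : 0 ≤ F l := (hdist l).1
  have hFle (l : ℝ) : F l ≤ (Ioi a).indicator 1 l := by
    by_cases hl : l ∈ Ioi a
    · simpa [indicator_of_mem hl] using (hdist l).2
    · simpa [indicator_of_notMem hl] using
        (hsupp _ measurableSet_Iic (Iic_subset_Iic.2 (not_lt.1 hl))).le
  have hGm : Monotone fun y => ∫ l in Iic y, F l := fun u v huv =>
    setIntegral_mono_set (integrableOn_Iic_of_le_indicator_Ioi hFm hFnn hFle v)
      (ae_of_all _ hFnn) (Iic_subset_Iic.2 huv).eventuallyLE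
  refine (tendsto_integral_exp_neg_mul_mul_apply_div hGm.measurable
    (fun y => setIntegral_nonneg measurableSet_Iic fun l _ => hFnn l)
    (setIntegral_Iic_le_max hFm hFnn hFle) hH3).congr' ?_
  filter_upwards [self_mem_nhdsWithin] with x hx
  exact (integral_mul_exp_neg_mul_eq_integral_exp_neg_mul_setIntegral hFm hFnn hFle hx).symm
end

section
/- Let P be a polynomial of exact degree n+1 with no zeros on the unit circle satisfying |P*(z)| < |P(z)| for all |z| < 1, where P*(z) = z^{n+1} conj(P(1/z̄)). Then the companion polynomials 𝒜 = (P + P*)/2 and ℬ = i(P − P*)/2 both have exact degree n+1 and all of their zeros lie on the unit circle. -/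
/-!
For `z ≠ 0` one has `‖P*(z)‖ = ‖z‖ ^ (n+1) * ‖P(1 / z̄)‖`, so the inequality `‖P*‖ < ‖P‖` on the
open disc reflects to `‖P‖ < ‖P*‖` outside the closed disc. A zero of `P ± P*` forces
`‖P*(z)‖ = ‖P(z)‖`, hence `‖z‖ = 1`. At `z = 0` the hypothesis reads `‖a_{n+1}‖ < ‖a_0‖`, so the
coefficient `a_{n+1} ± conj a_0` of `z ^ (n+1)` in `P ± P*` cannot vanish.
-/

open Polynomial ComplexConjugate

namespace Polynomial

theorem eval_reverse_of_ne_zero {K : Type*} [Field K] (f : K[X]) {z : K} (hz : z ≠ 0) :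
    f.reverse.eval z = z ^ f.natDegree * f.eval z⁻¹ := by
  have : Invertible z := invertibleOfNonzero hz
  have h := eval₂_reverse_mul_pow (RingHom.id K) z⁻¹ f
  rw [invOf_eq_inv, inv_inv, ← eval, ← eval] at h
  rw [← h, mul_left_comm, ← mul_pow, mul_inv_cancel₀ hz, one_pow, mul_one]

theorem coeff_reverse_natDegree {R : Type*} [Semiring R] (f : R[X]) :
    f.reverse.coeff f.natDegree = f.coeff 0 := by
  rw [coeff_reverse, revAt_le le_rfl, Nat.sub_self]

theorem natDegree_add_eq_left_of_coeff_ne {R : Type*} [Ring R] {f g : R[X]}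
    (hg : g.natDegree ≤ f.natDegree) (h : g.coeff f.natDegree ≠ -f.leadingCoeff) :
    (f + g).natDegree = f.natDegree :=
  natDegree_eq_of_le_of_coeff_ne_zero ((natDegree_add_le _ _).trans (max_le le_rfl hg))
    (by rw [coeff_add, ← leadingCoeff]; exact fun h0 => h (eq_neg_of_add_eq_zero_right h0))

theorem natDegree_sub_eq_left_of_coeff_ne {R : Type*} [Ring R] {f g : R[X]}
    (hg : g.natDegree ≤ f.natDegree) (h : g.coeff f.natDegree ≠ f.leadingCoeff) :
    (f - g).natDegree = f.natDegree :=
  natDegree_eq_of_le_of_coeff_ne_zero ((natDegree_sub_le _ _).trans (max_le le_rfl hg))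
    (by rw [coeff_sub, ← leadingCoeff]; exact fun h0 => h (sub_eq_zero.mp h0).symm)

noncomputable def conjReverse (f : ℂ[X]) : ℂ[X] := (f.map (starRingEnd ℂ)).reverse

theorem eval_map_conj (f : ℂ[X]) (w : ℂ) :
    (f.map (starRingEnd ℂ)).eval w = conj (f.eval (conj w)) := by
  rw [eval_map, eval, hom_eval₂, RingHom.comp_id, Complex.conj_conj]

theorem norm_eval_conjReverse (f : ℂ[X]) {z : ℂ} (hz : z ≠ 0) :
    ‖f.conjReverse.eval z‖ = ‖z‖ ^ f.natDegree * ‖f.eval (conj z)⁻¹‖ := by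
  rw [conjReverse, eval_reverse_of_ne_zero _ hz, natDegree_map, eval_map_conj, norm_mul,
    norm_pow, Complex.norm_conj, map_inv₀]

theorem coeff_zero_conjReverse (f : ℂ[X]) : f.conjReverse.coeff 0 = conj f.leadingCoeff := by
  rw [conjReverse, coeff_zero_reverse, leadingCoeff_map]

theorem coeff_conjReverse_natDegree (f : ℂ[X]) :
    f.conjReverse.coeff f.natDegree = conj (f.coeff 0) := by
  rw [conjReverse, ← natDegree_map (starRingEnd ℂ), coeff_reverse_natDegree, coeff_map]

theorem natDegree_conjReverse_le (f : ℂ[X]) : f.conjReverse.natDegree ≤ f.natDegree :=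
  (reverse_natDegree_le _).trans (natDegree_map _).le

section DominantInDisc

variable {P : ℂ[X]} (hin : ∀ z : ℂ, ‖z‖ < 1 → ‖P.conjReverse.eval z‖ < ‖P.eval z‖)
include hin

theorem norm_leadingCoeff_lt_norm_coeff_zero : ‖P.leadingCoeff‖ < ‖P.coeff 0‖ := by
  simpa only [← coeff_zero_eq_eval_zero, coeff_zero_conjReverse, Complex.norm_conj]
    using hin 0 (by simp)

theorem norm_eval_lt_norm_eval_conjReverse {z : ℂ} (hz : 1 < ‖z‖) :
    ‖P.eval z‖ < ‖P.conjReverse.eval z‖ := by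
  have hz0 : z ≠ 0 := norm_pos_iff.mp (one_pos.trans hz)
  set w := (conj z)⁻¹
  have hw0 : w ≠ 0 := by simpa [w] using hz0
  have hw : ‖w‖ = ‖z‖⁻¹ := by simp [w]
  have hPz : ‖P.eval z‖ = ‖z‖ ^ P.natDegree * ‖P.conjReverse.eval w‖ := by
    rw [norm_eval_conjReverse P hw0, hw, inv_pow, mul_inv_cancel_left₀ (by positivity)]
    simp [w]
  rw [hPz, norm_eval_conjReverse P hz0]
  exact mul_lt_mul_of_pos_left (hin w (by rw [hw]; exact inv_lt_one_of_one_lt₀ hz))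
    (by positivity)

theorem norm_eq_one_of_norm_eval_conjReverse_eq {z : ℂ}
    (h : ‖P.conjReverse.eval z‖ = ‖P.eval z‖) : ‖z‖ = 1 := by
  rcases lt_trichotomy ‖z‖ 1 with hz | hz | hz
  · exact absurd h (hin z hz).ne
  · exact hz
  · exact absurd h (norm_eval_lt_norm_eval_conjReverse hin hz).ne'

theorem natDegree_add_conjReverse : (P + P.conjReverse).natDegree = P.natDegree :=
  natDegree_add_eq_left_of_coeff_ne (natDegree_conjReverse_le P) fun h => by
    have h' := congrArg norm h
    rw [coeff_conjReverse_natDegree, norm_neg, Complex.norm_conj] at h'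
    exact (norm_leadingCoeff_lt_norm_coeff_zero hin).ne' h'

theorem natDegree_sub_conjReverse : (P - P.conjReverse).natDegree = P.natDegree :=
  natDegree_sub_eq_left_of_coeff_ne (natDegree_conjReverse_le P) fun h => by
    have h' := congrArg norm h
    rw [coeff_conjReverse_natDegree, Complex.norm_conj] at h'
    exact (norm_leadingCoeff_lt_norm_coeff_zero hin).ne' h'

theorem norm_eq_one_of_eval_add_conjReverse_eq_zero {z : ℂ}
    (h : (P + P.conjReverse).eval z = 0) : ‖z‖ = 1 := by
  rw [eval_add] at h
  exact norm_eq_one_of_norm_eval_conjReverse_eq hin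
    (by rw [eq_neg_of_add_eq_zero_right h, norm_neg])

theorem norm_eq_one_of_eval_sub_conjReverse_eq_zero {z : ℂ}
    (h : (P - P.conjReverse).eval z = 0) : ‖z‖ = 1 := by
  rw [eval_sub, sub_eq_zero] at h
  exact norm_eq_one_of_norm_eval_conjReverse_eq hin (by rw [h])

end DominantInDisc

end Polynomial

theorem stmt10_general (n : ℕ) (P : Polynomial ℂ)
    (hdeg : P.natDegree = n + 1)
    (hin : ∀ z : ℂ, ‖z‖ < 1 →
      ‖((P.map (starRingEnd ℂ)).reverse).eval z‖ < ‖P.eval z‖) :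
    let Pstar := (P.map (starRingEnd ℂ)).reverse
    let A := Polynomial.C (1 / 2 : ℂ) * (P + Pstar)
    let B := Polynomial.C (Complex.I / 2) * (P - Pstar)
    A.natDegree = n + 1 ∧ B.natDegree = n + 1 ∧
      (∀ z : ℂ, A.eval z = 0 → ‖z‖ = 1) ∧ (∀ z : ℂ, B.eval z = 0 → ‖z‖ = 1) := by
  have hhalf : (1 / 2 : ℂ) ≠ 0 := by norm_num
  have hIhalf : Complex.I / 2 ≠ 0 := by simp
  refine ⟨?_, ?_, fun z hz => ?_, fun z hz => ?_⟩
  · rw [natDegree_C_mul hhalf, ← hdeg]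
    exact natDegree_add_conjReverse hin
  · rw [natDegree_C_mul hIhalf, ← hdeg]
    exact natDegree_sub_conjReverse hin
  · rw [eval_C_mul, mul_eq_zero, or_iff_right hhalf] at hz
    exact norm_eq_one_of_eval_add_conjReverse_eq_zero hin hz
  · rw [eval_C_mul, mul_eq_zero, or_iff_right hIhalf] at hz
    exact norm_eq_one_of_eval_sub_conjReverse_eq_zero hin hz

/-- Let `P` be a polynomial of exact degree `n+1` with no zeros on the
unit circle satisfying `|P*(z)| < |P(z)|` for all `|z| < 1`, where
`P*(z) = z^{n+1} conj(P(1/z̄))` (i.e. the conjugate-reversed polynomial).  Then the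
companion polynomials `𝒜 = (P + P*)/2` and `ℬ = i(P - P*)/2` both have exact degree `n+1`
and all of their zeros lie on the unit circle. -/
theorem stmt10 (n : ℕ) (P : Polynomial ℂ)
    (hdeg : P.natDegree = n + 1)
    (hcirc : ∀ z : ℂ, ‖z‖ = 1 → P.eval z ≠ 0)
    (hin : ∀ z : ℂ, ‖z‖ < 1 →
      ‖((P.map (starRingEnd ℂ)).reverse).eval z‖ < ‖P.eval z‖) :
    let Pstar := (P.map (starRingEnd ℂ)).reverse
    let A := Polynomial.C (1 / 2 : ℂ) * (P + Pstar)
    let B := Polynomial.C (Complex.I / 2) * (P - Pstar)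
    A.natDegree = n + 1 ∧ B.natDegree = n + 1 ∧
      (∀ z : ℂ, A.eval z = 0 → ‖z‖ = 1) ∧ (∀ z : ℂ, B.eval z = 0 → ‖z‖ = 1) :=
  stmt10_general n P hdeg hin
end

section
/- Let P be a polynomial of exact degree n+1 with |P*(z)| < |P(z)| for |z| < 1 and no zeros on the unit circle, with companion polynomials 𝒜 = (P+P*)/2 and ℬ = i(P−P*)/2 and reproducing kernel 𝒦 of the space 𝒫_n with weight |P(e(x))|^{-2}. Then 𝒜 and ℬ have only simple zeros and 𝒜 and ℬ have no common zero. -/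
/-!
Write `S(w) = Im (ℬ(w) conj 𝒜(w))`. On the diagonal the kernel identity reads
`Re 𝒦(w,w) (1 - |w|²) = 4 S(w)`, so `S > 0` on the open disc and `S ≠ 0` off the unit circle.
Hence every zero of `𝒜` or `ℬ` lies on the circle, and a common zero would be a zero of
`P = 𝒜 - iℬ` there. If `z₀` were a zero of `𝒜` of multiplicity `m ≥ 2`, then along
`z₀ (1 - t v)` we have `S ≈ t^m Im (c conj v^m)` with `c ≠ 0`; the directions `v` with
`Re v > 0` point into the disc, and their `m`-th powers sweep an arc of length `mπ ≥ 2π`,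
so `S` takes negative values inside the disc. The same argument applies to `ℬ`,
as `Im (-𝒜 conj ℬ) = S`.
-/

open Polynomial ComplexConjugate Filter Topology

namespace Complex

theorem conj_exp_ofReal_mul_I_pow (x : ℝ) (m : ℕ) :
    conj (exp (x * I)) ^ m = exp ((-(m * x) : ℝ) * I) := by
  rw [← exp_conj, ← exp_nat_mul, map_mul, conj_ofReal, conj_I]
  push_cast; ring_nf

theorem exists_re_pos_im_mul_conj_pow_neg {c : ℂ} (hc : c ≠ 0) {m : ℕ} (hm : 2 ≤ m) :
    ∃ v : ℂ, 0 < v.re ∧ (c * conj v ^ m).im < 0 := by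
  obtain ⟨α, hα, hIc⟩ : ∃ α : ℝ, |α| ≤ Real.pi ∧ I * c = ‖c‖ * exp (α * I) :=
    ⟨arg (I * c), abs_le.2 ⟨(neg_pi_lt_arg _).le, arg_le_pi _⟩,
      by conv_lhs => rw [← norm_mul_exp_arg_mul_I (I * c), norm_mul, norm_I, one_mul]⟩
  have hm' : (2 : ℝ) ≤ m := by exact_mod_cast hm
  have hψ : |3 * α / (4 * m)| < Real.pi / 2 := by
    rw [abs_div, abs_mul, abs_of_pos (by positivity : (0:ℝ) < 4 * m), div_lt_iff₀ (by positivity)]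
    nlinarith [Real.pi_pos, abs_nonneg α]
  refine ⟨exp ((3 * α / (4 * m) : ℝ) * I), ?_, ?_⟩
  · rw [exp_ofReal_mul_I_re]
    exact Real.cos_pos_of_mem_Ioo (abs_lt.1 hψ)
  · -- `v ^ m = e^{3iα/4}`, so `c * conj v ^ m = -I * (I * c) * e^{-3iα/4} = -I ‖c‖ e^{iα/4}`
    have hc' : c * conj (exp ((3 * α / (4 * m) : ℝ) * I)) ^ m
        = -I * (‖c‖ * exp ((α / 4 : ℝ) * I)) := by
      have hexp : -(m * (3 * α / (4 * m))) = -(3 * α / 4) := by field_simp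
      have hc : c = -I * (I * c) := by ring_nf; rw [I_sq]; ring
      rw [conj_exp_ofReal_mul_I_pow, hexp]
      nth_rewrite 1 [hc]
      rw [hIc, mul_assoc, mul_assoc, ← exp_add]
      push_cast; ring_nf
    rw [hc', neg_mul, neg_im, I_mul_im, re_ofReal_mul, exp_ofReal_mul_I_re, neg_neg_iff_pos]
    exact mul_pos (norm_pos_iff.2 hc) (Real.cos_pos_of_mem_Ioo ⟨by
      linarith [neg_abs_le α, Real.pi_pos], by linarith [le_abs_self α, Real.pi_pos]⟩)

theorem eventually_norm_one_sub_mul_lt_one {v : ℂ} (hv : 0 < v.re) :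
    ∀ᶠ t : ℝ in 𝓝[>] 0, ‖1 - t * v‖ < 1 := by
  have hlim : Tendsto (fun t : ℝ => 2 * v.re - t * normSq v) (𝓝[>] 0) (𝓝 (2 * v.re)) :=
    ((continuous_const.sub (continuous_id.mul continuous_const)).tendsto' 0 _
      (by simp)).mono_left nhdsWithin_le_nhds
  filter_upwards [self_mem_nhdsWithin, hlim.eventually (lt_mem_nhds (by linarith : (0 : ℝ) < 2 * v.re))]
    with t (ht : 0 < t) hpos
  have : normSq (1 - t * v) = 1 - t * (2 * v.re - t * normSq v) := by
    rw [normSq_sub, normSq_one, normSq_mul, normSq_ofReal, one_mul, map_mul, conj_ofReal,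
      re_ofReal_mul, conj_re]
    ring
  rw [← sq_lt_one_iff₀ (norm_nonneg _), ← normSq_eq_norm_sq, this]
  nlinarith

theorem re_mul_one_sub_normSq_eq {k a b w : ℂ}
    (h : k * (1 - conj w * w) = 2 / I * (b * conj a - a * conj b)) :
    k.re * (1 - normSq w) = 4 * (b * conj a).im := by
  have hba : a * conj b = conj (b * conj a) := by rw [map_mul, conj_conj, mul_comm]
  have hrhs : 2 / I * (b * conj a - a * conj b) = ((4 * (b * conj a).im : ℝ) : ℂ) := by
    rw [hba, sub_conj, div_eq_mul_inv, inv_I]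
    push_cast; ring_nf; rw [I_sq]; ring
  rw [← normSq_eq_conj_mul_self, hrhs, ← ofReal_one, ← ofReal_sub] at h
  simpa using congrArg re h

theorem im_neg_mul_conj (a b : ℂ) : (-a * conj b).im = (b * conj a).im := by
  simp only [neg_mul, neg_im, mul_im, conj_re, conj_im]; ring

end Complex

namespace Polynomial

theorem exists_norm_lt_one_im_mul_conj_neg {f g : ℂ[X]} {z₀ : ℂ} (hz₀ : ‖z₀‖ = 1) (hf : f ≠ 0)
    (hm : 2 ≤ f.rootMultiplicity z₀) (hg : g.eval z₀ ≠ 0) :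
    ∃ w : ℂ, ‖w‖ < 1 ∧ (g.eval w * conj (f.eval w)).im < 0 := by
  set m := f.rootMultiplicity z₀
  set q := f /ₘ (X - C z₀) ^ m
  have hfq : ∀ w, f.eval w = (w - z₀) ^ m * q.eval w := fun w => by
    simpa using congrArg (eval w) (pow_mul_divByMonic_rootMultiplicity_eq f z₀).symm
  have hq : q.eval z₀ ≠ 0 := eval_divByMonic_pow_rootMultiplicity_ne_zero z₀ hf
  have hz₀' : z₀ ≠ 0 := norm_ne_zero_iff.1 (by rw [hz₀]; exact one_ne_zero)
  set c := g.eval z₀ * conj (q.eval z₀) * conj (-z₀) ^ m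
  have hc : c ≠ 0 := by simp [c, hg, hq, hz₀']
  obtain ⟨v, hv, hcv⟩ := Complex.exists_re_pos_im_mul_conj_pow_neg hc hm
  -- along `γ t = z₀ (1 - t v)` we have `g conj f = t ^ m φ t` with `φ 0 = c * conj v ^ m`
  set γ : ℝ → ℂ := fun t => z₀ * (1 - t * v)
  set φ : ℝ → ℂ := fun t => g.eval (γ t) * conj (q.eval (γ t)) * conj (-z₀) ^ m * conj v ^ m
  have hφ : Continuous φ := by fun_prop
  have hφ0 : (φ 0).im < 0 := by simpa [φ, γ, c] using hcv
  have hev : ∀ᶠ t in 𝓝[>] (0 : ℝ), (φ t).im < 0 :=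
    eventually_nhdsWithin_of_eventually_nhds
      (((Complex.continuous_im.comp hφ).tendsto 0).eventually (gt_mem_nhds hφ0))
  obtain ⟨t, ht, hnorm, hφt⟩ :=
    (eventually_mem_nhdsWithin.and ((Complex.eventually_norm_one_sub_mul_lt_one hv).and hev)).exists
  refine ⟨γ t, by simpa [γ, hz₀] using hnorm, ?_⟩
  have hsplit : g.eval (γ t) * conj (f.eval (γ t)) = (t ^ m : ℝ) * φ t := by
    have hγ : γ t - z₀ = t * (-z₀ * v) := by ring
    rw [hfq, hγ]
    simp only [φ, map_mul, map_pow, Complex.conj_ofReal]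
    push_cast; ring
  rw [hsplit, Complex.im_ofReal_mul]
  exact mul_neg_of_pos_of_neg (pow_pos ht m) hφt

theorem eval_derivative_ne_zero_of_im_mul_conj_pos {f g : ℂ[X]}
    (hpos : ∀ w : ℂ, ‖w‖ < 1 → 0 < (g.eval w * conj (f.eval w)).im) {z₀ : ℂ} (hz₀ : ‖z₀‖ = 1)
    (hf : f.IsRoot z₀) (hg : g.eval z₀ ≠ 0) : (derivative f).eval z₀ ≠ 0 := by
  intro hder
  have hf0 : f ≠ 0 := by rintro rfl; simpa using hpos 0 (by simp)
  obtain ⟨w, hw, hneg⟩ := exists_norm_lt_one_im_mul_conj_neg hz₀ hf0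
    ((one_lt_rootMultiplicity_iff_isRoot hf0).2 ⟨hf, hder⟩) hg
  exact (hpos w hw).not_gt hneg

theorem eval_eq_sub_I_mul_of_eq_half_add {P Q A B : ℂ[X]} (hA : A = C (1 / 2 : ℂ) * (P + Q))
    (hB : B = C (Complex.I / 2) * (P - Q)) (z : ℂ) :
    P.eval z = A.eval z - Complex.I * B.eval z := by
  subst hA hB
  simp only [eval_mul, eval_C, eval_add, eval_sub]
  linear_combination (eval z P - eval z Q) / 2 * Complex.I_sq

end Polynomial

theorem stmt12_general (P A B : Polynomial ℂ)
    (hcirc : ∀ z : ℂ, ‖z‖ = 1 → P.eval z ≠ 0)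
    (hA : A = Polynomial.C (1 / 2 : ℂ) * (P + (P.map (starRingEnd ℂ)).reverse))
    (hB : B = Polynomial.C (Complex.I / 2) * (P - (P.map (starRingEnd ℂ)).reverse))
    (K : ℂ → ℂ → ℂ)
    (hrep : ∀ w z : ℂ, K w z * (1 - (starRingEnd ℂ) w * z) =
      (2 / Complex.I) * (B.eval z * (starRingEnd ℂ) (A.eval w) -
        A.eval z * (starRingEnd ℂ) (B.eval w)))
    (hpos : ∀ w : ℂ, 0 < (K w w).re) :
    (∀ z : ℂ, A.eval z = 0 → (Polynomial.derivative A).eval z ≠ 0) ∧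
    (∀ z : ℂ, B.eval z = 0 → (Polynomial.derivative B).eval z ≠ 0) ∧
    (∀ z : ℂ, ¬(A.eval z = 0 ∧ B.eval z = 0)) := by
  have hsign (w : ℂ) : (K w w).re * (1 - ‖w‖ ^ 2) = 4 * (B.eval w * conj (A.eval w)).im := by
    rw [← Complex.normSq_eq_norm_sq]
    exact Complex.re_mul_one_sub_normSq_eq (hrep w w)
  have hdisc (w : ℂ) (hw : ‖w‖ < 1) : 0 < (B.eval w * conj (A.eval w)).im := by
    have := mul_pos (hpos w) (by nlinarith [norm_nonneg w] : 0 < 1 - ‖w‖ ^ 2)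
    linarith [hsign w]
  have hcircle (w : ℂ) (hw : (B.eval w * conj (A.eval w)).im = 0) : ‖w‖ = 1 := by
    have := hsign w
    rw [hw, mul_zero, mul_eq_zero, or_iff_right (hpos w).ne', sub_eq_zero, eq_comm,
      pow_eq_one_iff_of_nonneg (norm_nonneg w) two_ne_zero] at this
    exact this
  have hcommon (z : ℂ) : ¬(A.eval z = 0 ∧ B.eval z = 0) := fun ⟨hAz, hBz⟩ =>
    hcirc z (hcircle z (by simp [hAz]))
      (by rw [eval_eq_sub_I_mul_of_eq_half_add hA hB, hAz, hBz]; ring)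
  refine ⟨fun z hz => ?_, fun z hz => ?_, hcommon⟩
  · exact eval_derivative_ne_zero_of_im_mul_conj_pos hdisc (hcircle z (by simp [hz])) hz
      fun hBz => hcommon z ⟨hz, hBz⟩
  · refine eval_derivative_ne_zero_of_im_mul_conj_pos (g := -A) (fun w hw => ?_)
      (hcircle z (by simp [hz])) hz (by simpa using fun hAz => hcommon z ⟨hAz, hz⟩)
    rw [eval_neg, Complex.im_neg_mul_conj]
    exact hdisc w hw

/-- Let `P` be a polynomial of exact degree `n+1` with `|P*(z)| < |P(z)|`
for `|z| < 1` and no zeros on the unit circle, with companion polynomials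
`𝒜 = (P + P*)/2`, `ℬ = i(P - P*)/2`, and let `𝒦` be the reproducing kernel of `𝒫_n`
with weight `|P(e(x))|^{-2}`, which admits the representation
`𝒦(w,z)(1 - w̄z) = (2/i)(ℬ(z)conj(𝒜(w)) - 𝒜(z)conj(ℬ(w)))` and satisfies
`𝒦(w,w) > 0` for all `w`.  Then `𝒜` and `ℬ` have only simple zeros, and they have no
common zero. -/
theorem stmt12 (n : ℕ) (P A B : Polynomial ℂ)
    (hdeg : P.natDegree = n + 1)
    (hcirc : ∀ z : ℂ, ‖z‖ = 1 → P.eval z ≠ 0)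
    (hin : ∀ z : ℂ, ‖z‖ < 1 →
      ‖((P.map (starRingEnd ℂ)).reverse).eval z‖ < ‖P.eval z‖)
    (hA : A = Polynomial.C (1 / 2 : ℂ) * (P + (P.map (starRingEnd ℂ)).reverse))
    (hB : B = Polynomial.C (Complex.I / 2) * (P - (P.map (starRingEnd ℂ)).reverse))
    (K : ℂ → ℂ → ℂ)
    (hrep : ∀ w z : ℂ, K w z * (1 - (starRingEnd ℂ) w * z) =
      (2 / Complex.I) * (B.eval z * (starRingEnd ℂ) (A.eval w) -
        A.eval z * (starRingEnd ℂ) (B.eval w)))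
    (hpos : ∀ w : ℂ, 0 < (K w w).re) :
    (∀ z : ℂ, A.eval z = 0 → (Polynomial.derivative A).eval z ≠ 0) ∧
    (∀ z : ℂ, B.eval z = 0 → (Polynomial.derivative B).eval z ≠ 0) ∧
    (∀ z : ℂ, ¬(A.eval z = 0 ∧ B.eval z = 0)) :=
  stmt12_general P A B hcirc hA hB K hrep hpos
end

section
/- For λ > 0 and x ∉ ℤ, the periodization h̃(λ,x) := Σ_{n∈ℤ} (v(λ,x+n) − v(λ,−x−n)) equals −∂/∂λ ( sinh(−λ(x − ⌊x⌋ − 1/2)) / sinh(λ/2) ), and consequently ∫_0^∞ h̃(λ,x) dλ = −2(x − ⌊x⌋ − 1/2), i.e. the periodization of sgn recovers −2 times the sawtooth function. -/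
open MeasureTheory

/-- `v(λ,x) = x e^{-λx}` for `x > 0`, and `0` for `x ≤ 0`. -/
noncomputable def v (lam x : ℝ) : ℝ := if 0 < x then x * Real.exp (-lam * x) else 0

/-!
On `x > 0` we have `v(λ, x) = -∂_λ e^{-λx}`, so the periodization is `-∂_λ` of the
periodization of `e^{-λx} χ_{(0,∞)}`. With `a = x - ⌊x⌋` the latter is a difference of two
geometric series, `Σ_{k ≥ 0} e^{-λ(a+k)} - Σ_{k ≥ 0} e^{-λ(1-a+k)} = sinh(λ(1/2 - a)) / sinh(λ/2)`.
The integral over `λ` is then the limit `1 - 2a` of this ratio at `0⁺` minus its limit `0` at `∞`;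
the improper integral exists because the ratio is monotone in `λ`, which comes down to
`sinh(r y) ≤ r sinh y` for `0 ≤ r ≤ 1`, `0 ≤ y`, read off the power series of `sinh`.
-/

open Real Set Filter Topology

noncomputable def expSum (a l : ℝ) : ℝ := exp (-(l * a)) / (1 - exp (-l))

noncomputable def vSum (a l : ℝ) : ℝ :=
  exp (-(l * a)) * (a / (1 - exp (-l)) + exp (-l) / (1 - exp (-l)) ^ 2)

noncomputable def sinhRatio (a l : ℝ) : ℝ := sinh (-(l * (a - 1 / 2))) / sinh (l / 2)

lemma hasSum_add_mul_exp (a : ℝ) {l : ℝ} (hl : 0 < l) :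
    HasSum (fun k : ℕ => (a + k) * exp (-l * (a + k))) (vSum a l) := by
  have hq : ‖exp (-l)‖ < 1 := by
    rw [norm_of_nonneg (exp_pos _).le]; simpa using hl
  have hgeom := (hasSum_geometric_of_norm_lt_one hq).mul_left a
  have hsum := ((hgeom.add (hasSum_coe_mul_geometric_of_norm_lt_one hq)).mul_left
    (exp (-(l * a))))
  have hterm : ∀ k : ℕ, (a + k) * exp (-l * (a + k)) =
      exp (-(l * a)) * (a * exp (-l) ^ k + k * exp (-l) ^ k) := fun k => by
    rw [show -l * (a + k) = -(l * a) + k * -l by ring, exp_add, exp_nat_mul]; ring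
  simpa only [hterm, vSum, div_eq_mul_inv a] using hsum

lemma hasSum_v_add_int {a : ℝ} (ha0 : 0 < a) (ha1 : a ≤ 1) {l : ℝ} (hl : 0 < l) :
    HasSum (fun n : ℤ => v l (a + n)) (vSum a l) := by
  refine (Nat.cast_injective.hasSum_iff fun n hn => ?_).1 ?_
  · have hn : n ≤ -1 := by
      by_contra h
      exact hn ⟨n.toNat, Int.toNat_of_nonneg (by omega)⟩
    have hn : (n : ℝ) ≤ -1 := by exact_mod_cast hn
    rw [v, if_neg (by linarith)]
  · convert hasSum_add_mul_exp a hl using 2 with k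
    simp only [Function.comp_apply, Int.cast_natCast]
    rw [v, if_pos (by positivity)]

lemma hasSum_v_add_int_of_fract_pos {x : ℝ} (hx : 0 < Int.fract x) {l : ℝ} (hl : 0 < l) :
    HasSum (fun n : ℤ => v l (x + n)) (vSum (Int.fract x) l) := by
  have h := (Equiv.addRight ⌊x⌋).hasSum_iff.2
    (hasSum_v_add_int hx (Int.fract_lt_one x).le hl)
  convert h using 2 with n
  simp only [Function.comp_apply, Equiv.coe_addRight, Int.cast_add, Int.fract]
  ring_nf

lemma hasSum_periodization {x : ℝ} (hx : 0 < Int.fract x) {l : ℝ} (hl : 0 < l) :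
    HasSum (fun n : ℤ => v l (x + n) - v l (-x - n))
      (vSum (Int.fract x) l - vSum (1 - Int.fract x) l) := by
  have hneg := (Equiv.neg ℤ).hasSum_iff.2 <| hasSum_v_add_int_of_fract_pos
    ((Int.fract_neg hx.ne').symm ▸ sub_pos.2 (Int.fract_lt_one x)) hl
  rw [Int.fract_neg hx.ne'] at hneg
  refine (hasSum_v_add_int_of_fract_pos hx hl).sub ?_
  simpa only [Function.comp_def, Equiv.neg_apply, Int.cast_neg, ← sub_eq_add_neg] using hneg

lemma one_sub_exp_neg_ne_zero {l : ℝ} (hl : l ≠ 0) : 1 - exp (-l) ≠ 0 := by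
  rw [sub_ne_zero, ne_comm, Ne, exp_eq_one_iff, neg_eq_zero]; exact hl

lemma hasDerivAt_expSum (a : ℝ) {l : ℝ} (hl : l ≠ 0) :
    HasDerivAt (expSum a) (-vSum a l) l := by
  have hnum : HasDerivAt (fun t => exp (-(t * a))) (exp (-(l * a)) * -a) l := by
    simpa using ((hasDerivAt_id l).mul_const a).neg.exp
  have hden : HasDerivAt (fun t => 1 - exp (-t)) (exp (-l)) l := by
    simpa using (hasDerivAt_neg l).exp.const_sub 1
  have hq := one_sub_exp_neg_ne_zero hl
  refine (hnum.div hden hq).congr_deriv ?_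
  rw [vSum]
  field_simp
  ring

lemma sinhRatio_eq_expSum_sub (a : ℝ) : sinhRatio a = fun l => expSum a l - expSum (1 - a) l := by
  funext l
  have hnum : 2 * sinh (-(l * (a - 1 / 2))) =
      exp (l / 2) * (exp (-(l * a)) - exp (-(l * (1 - a)))) := by
    rw [sinh_eq, mul_sub (exp _), ← exp_add, ← exp_add]; ring_nf
  have hden : 2 * sinh (l / 2) = exp (l / 2) * (1 - exp (-l)) := by
    rw [sinh_eq, mul_sub (exp _), ← exp_add]; ring_nf
  rw [sinhRatio, expSum, expSum, div_sub_div_same, ← mul_div_mul_left _ _ two_ne_zero, hnum, hden,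
    mul_div_mul_left _ _ (exp_pos _).ne']

lemma hasDerivAt_sinhRatio (a : ℝ) {l : ℝ} (hl : l ≠ 0) :
    HasDerivAt (sinhRatio a) (-(vSum a l - vSum (1 - a) l)) l := by
  rw [sinhRatio_eq_expSum_sub]
  exact ((hasDerivAt_expSum a hl).sub (hasDerivAt_expSum (1 - a) hl)).congr_deriv (by ring)

lemma hasDerivAt_sinhRatio' (a : ℝ) {l : ℝ} (hl : l ≠ 0) :
    HasDerivAt (sinhRatio a)
      (((1 - a) * sinh (a * l) - a * sinh ((1 - a) * l)) / (2 * sinh (l / 2) ^ 2)) l := by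
  have hnum : HasDerivAt (fun t => sinh (-(t * (a - 1 / 2))))
      (cosh (-(l * (a - 1 / 2))) * -(a - 1 / 2)) l := by
    simpa using ((hasDerivAt_id l).mul_const (a - 1 / 2)).neg.sinh
  have hden : HasDerivAt (fun t => sinh (t / 2)) (cosh (l / 2) * (1 / 2)) l := by
    simpa using ((hasDerivAt_id l).div_const 2).sinh
  have hsinh : sinh (l / 2) ≠ 0 := by simpa using hl
  refine (hnum.div hden hsinh).congr_deriv ?_
  have ha : a * l = l / 2 + l * (a - 1 / 2) := by ring
  have ha' : (1 - a) * l = l / 2 - l * (a - 1 / 2) := by ring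
  rw [ha, ha', sinh_add, sinh_sub, sinh_neg, cosh_neg]
  field_simp
  ring

lemma vSum_sub_vSum_eq (a : ℝ) {l : ℝ} (hl : l ≠ 0) :
    vSum a l - vSum (1 - a) l =
      (a * sinh ((1 - a) * l) - (1 - a) * sinh (a * l)) / (2 * sinh (l / 2) ^ 2) := by
  rw [← neg_neg (vSum a l - _), (hasDerivAt_sinhRatio a hl).unique (hasDerivAt_sinhRatio' a hl),
    ← neg_div, neg_sub]

lemma sinh_mul_le_mul_sinh {r y : ℝ} (hr0 : 0 ≤ r) (hr1 : r ≤ 1) (hy : 0 ≤ y) :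
    sinh (r * y) ≤ r * sinh y := by
  refine hasSum_le (fun n => ?_) (hasSum_sinh (r * y)) ((hasSum_sinh y).mul_left r)
  rw [mul_pow, mul_div_assoc]
  gcongr
  exact pow_le_of_le_one hr0 hr1 (by omega)

lemma vSum_sub_vSum_nonneg {a l : ℝ} (ha0 : 0 ≤ a) (ha : a ≤ 1 / 2) (hl : 0 < l) :
    0 ≤ vSum a l - vSum (1 - a) l := by
  rw [vSum_sub_vSum_eq a hl.ne']
  have hb : 0 < 1 - a := by linarith
  have key : sinh (a / (1 - a) * ((1 - a) * l)) ≤ a / (1 - a) * sinh ((1 - a) * l) :=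
    sinh_mul_le_mul_sinh (by positivity) ((div_le_one hb).2 (by linarith)) (by positivity)
  rw [show a / (1 - a) * ((1 - a) * l) = a * l by field_simp, div_mul_eq_mul_div,
    le_div_iff₀ hb] at key
  exact div_nonneg (by linarith) (by positivity)

lemma vSum_sub_vSum_nonpos {a l : ℝ} (ha : 1 / 2 ≤ a) (ha1 : a ≤ 1) (hl : 0 < l) :
    vSum a l - vSum (1 - a) l ≤ 0 := by
  have h := vSum_sub_vSum_nonneg (a := 1 - a) (by linarith) (by linarith) hl
  rw [sub_sub_cancel] at h
  linarith

lemma tendsto_expSum_atTop {a : ℝ} (ha : 0 < a) : Tendsto (expSum a) atTop (𝓝 0) := by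
  have hnum : Tendsto (fun l => exp (-(l * a))) atTop (𝓝 0) :=
    tendsto_exp_neg_atTop_nhds_zero.comp (tendsto_id.atTop_mul_const ha)
  have hden : Tendsto (fun l => 1 - exp (-l)) atTop (𝓝 (1 - 0)) :=
    tendsto_exp_neg_atTop_nhds_zero.const_sub 1
  have h := hnum.div hden (by norm_num)
  rwa [sub_zero, zero_div] at h

lemma tendsto_sinhRatio_atTop {a : ℝ} (ha0 : 0 < a) (ha1 : a < 1) :
    Tendsto (sinhRatio a) atTop (𝓝 0) := by
  rw [sinhRatio_eq_expSum_sub, ← sub_zero 0]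
  exact (tendsto_expSum_atTop ha0).sub (tendsto_expSum_atTop (sub_pos.2 ha1))

lemma tendsto_div_of_hasDerivAt_of_eq_zero {f g : ℝ → ℝ} {f' g' x : ℝ} (hf : HasDerivAt f f' x)
    (hg : HasDerivAt g g' x) (hfx : f x = 0) (hgx : g x = 0) (hg' : g' ≠ 0) :
    Tendsto (fun t => f t / g t) (𝓝[≠] x) (𝓝 (f' / g')) := by
  refine ((hasDerivAt_iff_tendsto_slope.1 hf).div (hasDerivAt_iff_tendsto_slope.1 hg) hg').congr'
    ?_
  filter_upwards [self_mem_nhdsWithin] with t ht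
  rw [Pi.div_apply, slope_def_field, slope_def_field, hfx, hgx, sub_zero, sub_zero,
    div_div_div_cancel_right₀ (sub_ne_zero.2 ht)]

lemma tendsto_sinhRatio_nhdsNE (a : ℝ) :
    Tendsto (sinhRatio a) (𝓝[≠] 0) (𝓝 (-2 * (a - 1 / 2))) := by
  have hnum : HasDerivAt (fun t => sinh (-(t * (a - 1 / 2)))) (-(a - 1 / 2)) 0 := by
    simpa using ((hasDerivAt_id (0 : ℝ)).mul_const (a - 1 / 2)).neg.sinh
  have hden : HasDerivAt (fun t => sinh (t / 2)) (1 / 2) 0 := by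
    simpa using ((hasDerivAt_id (0 : ℝ)).div_const 2).sinh
  have h := tendsto_div_of_hasDerivAt_of_eq_zero hnum hden (by simp) (by simp) (by norm_num)
  rwa [show -(a - 1 / 2) / (1 / 2) = -2 * (a - 1 / 2) by ring] at h

theorem integral_Ioi_of_hasDerivAt_of_tendsto_nhdsGT {f f' : ℝ → ℝ} {a l m : ℝ}
    (hderiv : ∀ x ∈ Ioi a, HasDerivAt f (f' x) x)
    (hsign : (∀ x ∈ Ioi a, 0 ≤ f' x) ∨ ∀ x ∈ Ioi a, f' x ≤ 0)
    (hm : Tendsto f (𝓝[>] a) (𝓝 m)) (hl : Tendsto f atTop (𝓝 l)) :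
    ∫ x in Ioi a, f' x = l - m := by
  classical
  set F := Function.update f a m
  have hFa : F a = m := Function.update_self ..
  have hcont : ContinuousWithinAt F (Ici a) a := by
    rwa [continuousWithinAt_update_same, Ici_sdiff_left]
  have hderivF : ∀ x ∈ Ioi a, HasDerivAt F (f' x) x := fun x hx =>
    (hderiv x hx).congr_of_eventuallyEq <| by
      filter_upwards [isOpen_ne.mem_nhds (ne_of_gt hx)] with y hy
      exact Function.update_of_ne hy ..
  have hlF : Tendsto F atTop (𝓝 l) := hl.congr' <| by
    filter_upwards [eventually_ne_atTop a] with x hx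
    exact (Function.update_of_ne hx ..).symm
  rcases hsign with h | h
  · rw [integral_Ioi_of_hasDerivAt_of_nonneg hcont hderivF h hlF, hFa]
  · rw [integral_Ioi_of_hasDerivAt_of_nonpos hcont hderivF h hlF, hFa]

/-- For `λ > 0` and `x ∉ ℤ`, the periodization
`h̃(λ,x) = Σ_{n∈ℤ} (v(λ,x+n) - v(λ,-x-n))` equals
`-∂/∂λ ( sinh(-λ(x - ⌊x⌋ - 1/2)) / sinh(λ/2) )`, and consequently
`∫_0^∞ h̃(λ,x) dλ = -2(x - ⌊x⌋ - 1/2)`: the periodization of `sgn` recovers `-2` times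
the sawtooth function. -/
theorem stmt16 (x : ℝ) (hx : ¬∃ n : ℤ, x = n) :
    (∀ lam : ℝ, 0 < lam →
      HasDerivAt (fun l : ℝ => Real.sinh (-(l * (x - (⌊x⌋ : ℝ) - 1/2))) / Real.sinh (l / 2))
        (-(∑' n : ℤ, (v lam (x + n) - v lam (-x - n)))) lam) ∧
    (∫ lam in Set.Ioi (0:ℝ), ∑' n : ℤ, (v lam (x + n) - v lam (-x - n))) =
      -2 * (x - (⌊x⌋ : ℝ) - 1/2) := by
  have hfract : 0 < Int.fract x := Int.fract_pos.2 fun h => hx ⟨⌊x⌋, h⟩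
  have hsum : ∀ l ∈ Ioi (0 : ℝ), ∑' n : ℤ, (v l (x + n) - v l (-x - n)) =
      vSum (Int.fract x) l - vSum (1 - Int.fract x) l :=
    fun l hl => (hasSum_periodization hfract hl).tsum_eq
  rw [Int.self_sub_floor]
  refine ⟨fun lam hlam => ?_, ?_⟩
  · rw [hsum lam hlam]
    exact hasDerivAt_sinhRatio _ hlam.ne'
  rw [setIntegral_congr_fun measurableSet_Ioi hsum]
  set a := Int.fract x
  have hsign : (∀ l ∈ Ioi (0 : ℝ), 0 ≤ vSum a l - vSum (1 - a) l) ∨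
      ∀ l ∈ Ioi (0 : ℝ), vSum a l - vSum (1 - a) l ≤ 0 := (le_total a (1 / 2)).imp
    (fun h l hl => vSum_sub_vSum_nonneg hfract.le h hl)
    (fun h l hl => vSum_sub_vSum_nonpos h (Int.fract_lt_one x).le hl)
  rw [integral_Ioi_of_hasDerivAt_of_tendsto_nhdsGT (f := -sinhRatio a)
    (fun l hl => (hasDerivAt_sinhRatio a (ne_of_gt hl)).neg.congr_deriv (neg_neg _)) hsign
    ((tendsto_sinhRatio_nhdsNE a).mono_left (nhdsGT_le_nhdsNE 0)).neg
    (tendsto_sinhRatio_atTop hfract (Int.fract_lt_one x)).neg]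
  ring
end

section
/- Let L: ℂ → ℂ be an entire function of exponential type at most τ with L and L' both in L¹(ℝ). Then the periodization Σ_{n∈ℤ} L(x+n) converges for every real x and equals the trigonometric polynomial Σ_{|k| < τ/(2π)} L̂(k) e(kx), where L̂(t) = ∫ L(x)e(−tx)dx; in particular the periodization of L is a trigonometric polynomial of degree less than τ/(2π). -/
open MeasureTheory

/-- An entire function has exponential type at most `τ` if for every `ε > 0` it is
`O(e^{(τ+ε)|z|})`. -/
def ExpTypeLE (F : ℂ → ℂ) (τ : ℝ) : Prop :=
  ∀ ε : ℝ, 0 < ε → ∃ C : ℝ, ∀ z : ℂ, ‖F z‖ ≤ C * Real.exp ((τ + ε) * ‖z‖)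

/-!
Since `L` and `L'` are integrable on `ℝ`, `‖L t‖ ≤ ∫_t^{t+1} (‖L‖ + ‖L'‖)`: so `L` is bounded on `ℝ`
and its translates are summable locally uniformly, which is what Poisson summation needs.
By Phragmén–Lindelöf, being bounded on `ℝ` and of exponential type `τ`, `L` satisfies
`‖L z‖ ≤ M e^{a Im z}` on the upper half-plane for every `a > τ`. For `2πξ + τ < 0` the function
`L z e(-ξz) / (1 - iεz)²` is then holomorphic on the closed upper half-plane and decays like
`e^{-b Im z} / (1 + ε² (Re z)²)` with `b > 0`; shifting the line of integration upwards shows that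
its integral over `ℝ` vanishes, and letting `ε → 0` gives `L̂(ξ) = 0`. Reflection `z ↦ -z` and
continuity of `L̂` give `L̂(ξ) = 0` whenever `|ξ| ≥ τ/(2π)`, so Poisson summation leaves only the
frequencies `|k| < τ/(2π)`.
-/

open Set Filter Topology Complex intervalIntegral
open scoped FourierTransform Real

section DerivativeBounds

variable {E : Type*} [NormedAddCommGroup E] [NormedSpace ℝ E] [CompleteSpace E] {f f' : ℝ → E}

theorem norm_le_intervalIntegral_norm_add_norm_deriv (hf : ∀ x, HasDerivAt f (f' x) x) {a : ℝ}
    (hf' : IntervalIntegrable f' volume a (a + 1)) {t : ℝ} (ht : t ∈ Icc a (a + 1)) :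
    ‖f t‖ ≤ ∫ x in a..a + 1, (‖f x‖ + ‖f' x‖) := by
  have hcont : Continuous f := continuous_iff_continuousAt.2 fun x => (hf x).continuousAt
  have ha : a ≤ a + 1 := by linarith
  have hIcc : uIcc a (a + 1) = Icc a (a + 1) := uIcc_of_le ha
  obtain ⟨u, hu, hmin⟩ := isCompact_Icc.exists_isMinOn ⟨t, ht⟩ hcont.norm.continuousOn
  have hfu : ‖f u‖ ≤ ∫ x in a..a + 1, ‖f x‖ := by
    simpa using integral_mono_on ha intervalIntegrable_const
      (hcont.norm.intervalIntegrable (μ := volume) _ _) fun x hx => hmin hx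
  have hut : uIcc u t ⊆ uIcc a (a + 1) := uIcc_subset_uIcc (hIcc ▸ hu) (hIcc ▸ ht)
  have hftc : ∫ x in u..t, f' x = f t - f u :=
    integral_eq_sub_of_hasDerivAt (fun x _ => hf x) (hf'.mono_set hut)
  have hf'ut : ‖f t - f u‖ ≤ ∫ x in a..a + 1, ‖f' x‖ := by
    rw [← hftc, integral_of_le ha, ← uIoc_of_le ha]
    exact norm_integral_le_integral_norm_uIoc.trans <|
      setIntegral_mono_set hf'.def'.norm (ae_of_all _ fun _ => norm_nonneg _)
        (uIoc_subset_uIoc_of_uIcc_subset_uIcc hut).eventuallyLE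
  calc ‖f t‖ ≤ ‖f u‖ + ‖f t - f u‖ := norm_le_insert' _ _
    _ ≤ _ := add_le_add hfu hf'ut
    _ = _ := (integral_add (hcont.norm.intervalIntegrable _ _) hf'.norm).symm

theorem norm_le_integral_norm_add_norm_deriv (hf : ∀ x, HasDerivAt f (f' x) x)
    (hf1 : Integrable f) (hf'1 : Integrable f') (t : ℝ) :
    ‖f t‖ ≤ ∫ x, (‖f x‖ + ‖f' x‖) := by
  refine (norm_le_intervalIntegral_norm_add_norm_deriv hf hf'1.intervalIntegrable
    ⟨le_rfl, by linarith⟩).trans ?_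
  rw [integral_of_le (by linarith)]
  exact setIntegral_le_integral (hf1.norm.add hf'1.norm) (ae_of_all _ fun _ => by positivity)

end DerivativeBounds

theorem MeasureTheory.Integrable.summable_intervalIntegral_int {E : Type*} [NormedAddCommGroup E]
    [NormedSpace ℝ E] {g : ℝ → E} (hg : Integrable g) :
    Summable fun m : ℤ => ∫ x in (m : ℝ)..m + 1, g x :=
  hg.hasSum_intervalIntegral_comp_add_int.summable.congr fun m =>
    (integral_comp_add_right g (m : ℝ)).trans (by rw [zero_add, add_comm])

theorem summable_norm_restrict_comp_addRight {E : Type*} [NormedAddCommGroup E] [NormedSpace ℝ E]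
    [CompleteSpace E] {f : C(ℝ, E)} {f' : ℝ → E} (hf : ∀ x, HasDerivAt f (f' x) x)
    (hf1 : Integrable f) (hf'1 : Integrable f') (K : TopologicalSpace.Compacts ℝ) :
    Summable fun n : ℤ => ‖(f.comp (ContinuousMap.addRight (n : ℝ))).restrict K‖ := by
  set d : ℤ → ℝ := fun m => ∫ x in (m : ℝ)..m + 1, (‖f x‖ + ‖f' x‖)
  have hd0 : ∀ m, 0 ≤ d m := fun m =>
    integral_nonneg (by linarith) fun _ _ => by positivity
  obtain ⟨C, hC⟩ := K.isCompact.isBounded.exists_norm_le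
  set N : ℤ := ⌈C⌉
  have hsum : Summable fun n : ℤ => ∑ j ∈ Finset.Icc (-N) N, d (n + j) :=
    summable_sum fun j _ =>
      (hf1.norm.add hf'1.norm).summable_intervalIntegral_int.comp_injective (add_left_injective j)
  refine hsum.of_nonneg_of_le (fun n => norm_nonneg _) fun n =>
    (ContinuousMap.norm_le _ (Finset.sum_nonneg fun j _ => hd0 _)).2 fun ⟨x, hx⟩ => ?_
  have hxN : |x| ≤ N := (hC x hx).trans (Int.le_ceil C)
  have hcell : ‖f (x + n)‖ ≤ d (n + ⌊x⌋) := by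
    refine norm_le_intervalIntegral_norm_add_norm_deriv hf hf'1.intervalIntegrable ?_
    push_cast
    constructor <;> linarith [Int.floor_le x, Int.lt_floor_add_one x]
  refine hcell.trans (Finset.single_le_sum (fun j _ => hd0 (n + j)) (Finset.mem_Icc.2 ⟨?_, ?_⟩))
  · exact Int.le_floor.2 (by push_cast; linarith [neg_abs_le x])
  · exact Int.floor_le_iff.2 (by linarith [le_abs_self x])

theorem ExpTypeLE.norm_le_mul_exp_im {L : ℂ → ℂ} {τ a M : ℝ} (htype : ExpTypeLE L τ)
    (hL : Differentiable ℂ L) (hM : ∀ x : ℝ, ‖L x‖ ≤ M) (ha : τ < a) {z : ℂ} (hz : 0 ≤ z.im) :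
    ‖L z‖ ≤ M * Real.exp (a * z.im) := by
  obtain ⟨C, hC⟩ := htype (a - τ) (sub_pos.2 ha)
  rw [add_sub_cancel] at hC
  have hC0 : 0 ≤ C := by simpa using (norm_nonneg _).trans (hC 0)
  -- rotate the upper half-plane onto the right one and damp the growth along the imaginary axis
  set h : ℂ → ℂ := fun w => L (I * w) * cexp (-a * w)
  have hnorm : ∀ w, ‖h w‖ = ‖L (I * w)‖ * Real.exp (-a * w.re) := fun w => by
    simp [h, Complex.norm_exp]
  have hgrowth : ∀ w, ‖h w‖ ≤ C * Real.exp (2 * |a| * ‖w‖) := fun w => by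
    rw [hnorm, two_mul, add_mul, Real.exp_add, ← mul_assoc]
    refine mul_le_mul ?_ (Real.exp_le_exp.2 ?_) (Real.exp_nonneg _) (by positivity)
    · calc ‖L (I * w)‖ ≤ C * Real.exp (a * ‖w‖) := by simpa using hC (I * w)
        _ ≤ C * Real.exp (|a| * ‖w‖) := by gcongr; exact le_abs_self a
    · exact (le_abs_self _).trans (by rw [abs_mul, abs_neg]; gcongr; exact abs_re_le_norm w)
  have hreal : ∀ x : ℝ, 0 ≤ x → ‖h x‖ ≤ C := fun x hx => by
    rw [hnorm]
    calc ‖L (I * x)‖ * Real.exp (-a * (x : ℂ).re) ≤ C * Real.exp (a * x) * Real.exp (-a * x) :=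
          mul_le_mul_of_nonneg_right (by simpa [abs_of_nonneg hx] using hC (I * x))
            (Real.exp_nonneg _)
      _ = C := by rw [mul_assoc, ← Real.exp_add]; simp
  have himag : ∀ x : ℝ, ‖h (x * I)‖ ≤ M := fun x => by
    rw [hnorm, show I * (x * I) = ((-x : ℝ) : ℂ) by push_cast; linear_combination (x : ℂ) * I_sq]
    simpa using hM (-x)
  have hdiff : Differentiable ℂ h :=
    (hL.comp (differentiable_id.const_mul I)).mul
      (differentiable_exp.comp (differentiable_id.const_mul _))
  have key := PhragmenLindelof.right_half_plane_of_bounded_on_real (f := h) (z := -I * z)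
    hdiff.diffContOnCl
    ⟨1, one_lt_two, 2 * |a|, Asymptotics.IsBigO.of_bound C (Eventually.of_forall fun w => by
      rw [Real.rpow_one, Real.norm_of_nonneg (Real.exp_nonneg _)]; exact hgrowth w)⟩
    (isBoundedUnder_of_eventually_le ((eventually_ge_atTop 0).mono hreal)) himag (by simpa using hz)
  rwa [hnorm, show I * (-I * z) = z by linear_combination -z * I_sq,
    show (-I * z).re = z.im by simp,
    neg_mul, Real.exp_neg, ← div_eq_mul_inv, div_le_iff₀ (Real.exp_pos _)] at key

theorem integral_ofReal_eq_integral_add_mul_I {E : Type*} [NormedAddCommGroup E] [NormedSpace ℂ E]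
    {G : ℂ → E} {y : ℝ} (hy : 0 ≤ y) (hG : DifferentiableOn ℂ G (im ⁻¹' Icc 0 y)) {g : ℝ → ℝ}
    (hg : Integrable g) (hg0 : Tendsto g (cocompact ℝ) (𝓝 0))
    (hGg : ∀ x : ℝ, ∀ t ∈ Icc 0 y, ‖G (x + t * I)‖ ≤ g x) :
    ∫ x : ℝ, G x = ∫ x : ℝ, G (x + y * I) := by
  have hline : ∀ t ∈ Icc 0 y, Integrable fun x : ℝ => G (x + t * I) := fun t ht => by
    have hcont : Continuous fun x : ℝ => G (x + t * I) :=
      hG.continuousOn.comp_continuous (by fun_prop) fun x => by simpa using ht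
    exact hg.mono' hcont.aestronglyMeasurable (ae_of_all _ fun x => hGg x t ht)
  have hside : ∀ R : ℝ, ‖∫ t in (0 : ℝ)..y, G (R + t * I)‖ ≤ g R * y := fun R => by
    simpa [abs_of_nonneg hy] using norm_integral_le_of_norm_le_const fun t ht =>
      hGg R t (Ioc_subset_Icc_self (uIoc_of_le hy ▸ ht))
  have hrect : ∀ R : ℝ, (∫ x in -R..R, G x) - ∫ x in -R..R, G (x + y * I) =
      I • (∫ t in (0 : ℝ)..y, G (-R + t * I)) - I • ∫ t in (0 : ℝ)..y, G (R + t * I) := fun R => by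
    have h := integral_boundary_rect_eq_zero_of_differentiableOn G (-R) (R + y * I)
      (hG.mono fun z hz => by simpa [uIcc_of_le hy] using hz.2)
    simp only [neg_im, ofReal_im, neg_zero, ofReal_zero, zero_mul, add_zero, neg_re, ofReal_re,
      add_re, mul_re, I_re, mul_zero, I_im, mul_one, sub_self, add_im, mul_im, zero_add,
      ofReal_neg] at h
    linear_combination (norm := module) h
  have hlim : Tendsto (fun R : ℝ => (∫ x in -R..R, G x) - ∫ x in -R..R, G (x + y * I)) atTop
      (𝓝 ((∫ x : ℝ, G x) - ∫ x : ℝ, G (x + y * I))) := by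
    have h0 := hline 0 ⟨le_rfl, hy⟩
    simp only [ofReal_zero, zero_mul, add_zero] at h0
    exact (intervalIntegral_tendsto_integral h0 tendsto_neg_atTop_atBot tendsto_id).sub
      (intervalIntegral_tendsto_integral (hline y ⟨hy, le_rfl⟩) tendsto_neg_atTop_atBot tendsto_id)
  have hbound : Tendsto (fun R : ℝ => g (-R) * y + g R * y) atTop (𝓝 0) := by
    simpa using ((hg0.mono_left atBot_le_cocompact).comp tendsto_neg_atTop_atBot).mul_const y |>.add
      ((hg0.mono_left atTop_le_cocompact).mul_const y)
  refine sub_eq_zero.1 (tendsto_nhds_unique hlim (squeeze_zero_norm (fun R => ?_) hbound))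
  rw [hrect]
  refine (norm_sub_le _ _).trans (add_le_add ?_ ?_)
  · simpa only [norm_smul, norm_I, one_mul, ofReal_neg] using hside (-R)
  · simpa only [norm_smul, norm_I, one_mul] using hside R

section DampedFourierIntegral

variable {ε ξ : ℝ} {z : ℂ}

theorem one_add_sq_le_norm_one_sub_mul_I_sq (hε : 0 ≤ ε) (hz : 0 ≤ z.im) :
    1 + (ε * z.re) ^ 2 ≤ ‖(1 - ε * I * z) ^ 2‖ := by
  rw [norm_pow, ← normSq_eq_norm_sq, normSq_apply]
  simp only [sub_re, one_re, mul_re, ofReal_re, I_re, ofReal_im, I_im, sub_im, one_im, mul_im]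
  nlinarith [mul_nonneg hε hz]

theorem one_sub_mul_I_sq_ne_zero (hε : 0 ≤ ε) (hz : 0 ≤ z.im) : (1 - ε * I * z) ^ 2 ≠ 0 :=
  norm_pos_iff.1 <| (by positivity : (0 : ℝ) < 1 + (ε * z.re) ^ 2).trans_le
    (one_add_sq_le_norm_one_sub_mul_I_sq hε hz)

theorem norm_mul_cexp_div_one_sub_mul_I_sq_le (c : ℂ) (hε : 0 ≤ ε) (hz : 0 ≤ z.im) :
    ‖c * cexp (-(2 * π * I * ξ * z)) / (1 - ε * I * z) ^ 2‖ ≤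
      ‖c‖ * Real.exp (2 * π * ξ * z.im) / (1 + (ε * z.re) ^ 2) := by
  rw [norm_div, norm_mul, norm_exp]
  have hre : (-(2 * π * I * ξ * z)).re = 2 * π * ξ * z.im := by simp
  rw [hre]
  exact div_le_div_of_nonneg_left (by positivity) (by positivity)
    (one_add_sq_le_norm_one_sub_mul_I_sq hε hz)

theorem tendsto_inv_one_add_mul_sq_cocompact (hε : 0 < ε) :
    Tendsto (fun x : ℝ => (1 + (ε * x) ^ 2)⁻¹) (cocompact ℝ) (𝓝 0) := by
  refine Tendsto.inv_tendsto_atTop (tendsto_atTop_mono (fun x => ?_)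
    (((tendsto_pow_atTop two_ne_zero).comp tendsto_norm_cocompact_atTop).const_mul_atTop
      (pow_pos hε 2)))
  simp [mul_pow]

variable {L : ℂ → ℂ} {M a : ℝ}

theorem integral_mul_cexp_div_one_sub_mul_I_sq_eq_zero (hL : Differentiable ℂ L)
    (hM : ∀ z : ℂ, 0 ≤ z.im → ‖L z‖ ≤ M * Real.exp (a * z.im)) (hξ : a + 2 * π * ξ < 0)
    (hε : 0 < ε) :
    ∫ x : ℝ, L x * cexp (-(2 * π * I * ξ * x)) / (1 - ε * I * x) ^ 2 = 0 := by
  set G : ℂ → ℂ := fun z => L z * cexp (-(2 * π * I * ξ * z)) / (1 - ε * I * z) ^ 2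
  set w : ℝ → ℝ := fun x => (1 + (ε * x) ^ 2)⁻¹
  have hw : Integrable w := integrable_inv_one_add_sq.comp_mul_left' hε.ne'
  have hM0 : 0 ≤ M := by simpa using (norm_nonneg _).trans (hM 0 le_rfl)
  have hGd : ∀ y, DifferentiableOn ℂ G (im ⁻¹' Icc 0 y) := fun y =>
    ((hL.mul (differentiable_exp.comp (by fun_prop))).differentiableOn.div (by fun_prop))
      fun z hz => one_sub_mul_I_sq_ne_zero hε.le hz.1
  have hG : ∀ x t : ℝ, 0 ≤ t → ‖G (x + t * I)‖ ≤ M * Real.exp ((a + 2 * π * ξ) * t) * w x := by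
    intro x t ht
    have hz : 0 ≤ (x + t * I).im := by simpa using ht
    refine (norm_mul_cexp_div_one_sub_mul_I_sq_le _ hε.le hz).trans ?_
    simp only [add_re, ofReal_re, mul_re, I_re, ofReal_im, I_im, add_im, mul_im, mul_one,
      mul_zero, sub_zero, add_zero, zero_add]
    calc _ ≤ M * Real.exp (a * t) * Real.exp (2 * π * ξ * t) / (1 + (ε * x) ^ 2) := by
          gcongr; simpa using hM _ hz
      _ = _ := by rw [add_mul, Real.exp_add]; ring
  have hshift : ∀ y, 0 ≤ y → ‖∫ x : ℝ, G x‖ ≤ M * Real.exp ((a + 2 * π * ξ) * y) * ∫ x, w x := by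
    intro y hy
    rw [integral_ofReal_eq_integral_add_mul_I hy (hGd y) (hw.const_mul M)
      (by simpa using (tendsto_inv_one_add_mul_sq_cocompact hε).const_mul M)
      fun x t ht => (hG x t ht.1).trans ?_, ← MeasureTheory.integral_const_mul]
    · exact norm_integral_le_of_norm_le (hw.const_mul _) (ae_of_all _ fun x => hG x y hy)
    · exact mul_le_mul_of_nonneg_right (mul_le_of_le_one_right hM0 (Real.exp_le_one_iff.2
        (mul_nonpos_of_nonpos_of_nonneg hξ.le ht.1))) (by positivity)
  have hdecay : Tendsto (fun y => M * Real.exp ((a + 2 * π * ξ) * y) * ∫ x, w x) atTop (𝓝 0) := by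
    simpa using ((Real.tendsto_exp_atBot.comp (tendsto_id.const_mul_atTop_of_neg hξ)).const_mul
      M).mul_const (∫ x, w x)
  exact norm_le_zero_iff.1 (ge_of_tendsto hdecay ((eventually_ge_atTop 0).mono hshift))

theorem integral_mul_cexp_eq_zero_of_norm_le_mul_exp_im (hL : Differentiable ℂ L)
    (hL1 : Integrable fun x : ℝ => L x)
    (hM : ∀ z : ℂ, 0 ≤ z.im → ‖L z‖ ≤ M * Real.exp (a * z.im)) (hξ : a + 2 * π * ξ < 0) :
    ∫ x : ℝ, L x * cexp (-(2 * π * I * ξ * x)) = 0 := by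
  have hcont : Continuous fun x : ℝ => L x * cexp (-(2 * π * I * ξ * x)) :=
    (hL.continuous.comp continuous_ofReal).mul (by fun_prop)
  have hlim : Tendsto
      (fun ε : ℝ => ∫ x : ℝ, L x * cexp (-(2 * π * I * ξ * x)) / (1 - ε * I * x) ^ 2) (𝓝[>] 0)
      (𝓝 (∫ x : ℝ, L x * cexp (-(2 * π * I * ξ * x)))) := by
    refine tendsto_integral_filter_of_dominated_convergence (fun x => ‖L x‖)
      (eventually_nhdsWithin_of_forall fun ε hε => (hcont.div (by fun_prop) fun x =>
        one_sub_mul_I_sq_ne_zero (le_of_lt hε) (by simp)).aestronglyMeasurable)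
      (eventually_nhdsWithin_of_forall fun ε hε => ae_of_all _ fun x => ?_) hL1.norm
      (ae_of_all _ fun x => ?_)
    · refine (norm_mul_cexp_div_one_sub_mul_I_sq_le _ (le_of_lt hε) (by simp)).trans ?_
      simpa using div_le_self (norm_nonneg (L x)) (le_add_of_nonneg_right (sq_nonneg (ε * x)))
    · have hden : Tendsto (fun ε : ℝ => (1 - ε * I * x) ^ 2) (𝓝 0) (𝓝 1) :=
        Continuous.tendsto' (by fun_prop) 0 1 (by simp)
      have h := (tendsto_const_nhds (x := L x * cexp (-(2 * π * I * ξ * x)))).div hden one_ne_zero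
      rw [div_one] at h
      exact h.mono_left nhdsWithin_le_nhds
  exact tendsto_nhds_unique hlim (tendsto_const_nhds.congr' (eventually_nhdsWithin_of_forall
    fun ε hε => (integral_mul_cexp_div_one_sub_mul_I_sq_eq_zero hL hM hξ hε).symm))

end DampedFourierIntegral

theorem fourier_eq_integral_mul_cexp (f : ℝ → ℂ) (ξ : ℝ) :
    𝓕 f ξ = ∫ x, f x * cexp (-(2 * π * I * ξ * x)) := by
  rw [Real.fourier_real_eq_integral_exp_smul]
  congr 1 with x
  rw [smul_eq_mul, mul_comm]
  congr 2
  push_cast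
  ring

namespace ExpTypeLE

variable {L : ℂ → ℂ} {τ M ξ : ℝ}

theorem comp_neg (htype : ExpTypeLE L τ) : ExpTypeLE (fun z => L (-z)) τ :=
  fun ε hε => (htype ε hε).imp fun _ hC z => by simpa using hC (-z)

theorem integral_mul_cexp_eq_zero (htype : ExpTypeLE L τ) (hL : Differentiable ℂ L)
    (hM : ∀ x : ℝ, ‖L x‖ ≤ M) (hL1 : Integrable fun x : ℝ => L x) (hξ : 2 * π * ξ + τ < 0) :
    ∫ x : ℝ, L x * cexp (-(2 * π * I * ξ * x)) = 0 :=
  integral_mul_cexp_eq_zero_of_norm_le_mul_exp_im (a := (τ - 2 * π * ξ) / 2) hL hL1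
    (fun _ hz => htype.norm_le_mul_exp_im hL hM (by linarith) hz) (by linarith)

theorem fourier_eq_zero_of_lt_abs (htype : ExpTypeLE L τ) (hL : Differentiable ℂ L)
    (hM : ∀ x : ℝ, ‖L x‖ ≤ M) (hL1 : Integrable fun x : ℝ => L x) (hξ : τ / (2 * π) < |ξ|) :
    𝓕 (fun x : ℝ => L x) ξ = 0 := by
  rw [fourier_eq_integral_mul_cexp]
  rcases lt_abs.1 hξ with h | h <;> rw [div_lt_iff₀ Real.two_pi_pos] at h
  · rw [← integral_neg_eq_self, ← htype.comp_neg.integral_mul_cexp_eq_zero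
      (hL.comp differentiable_neg) (fun x => by simpa using hM (-x)) (by simpa using hL1.comp_neg)
      (ξ := -ξ) (by linarith)]
    congr 1 with x
    push_cast
    ring_nf
  · exact htype.integral_mul_cexp_eq_zero hL hM hL1 (by linarith)

theorem fourier_eq_zero (htype : ExpTypeLE L τ) (hL : Differentiable ℂ L)
    (hM : ∀ x : ℝ, ‖L x‖ ≤ M) (hL1 : Integrable fun x : ℝ => L x) (hξ : τ / (2 * π) ≤ |ξ|) :
    𝓕 (fun x : ℝ => L x) ξ = 0 := by
  have hZ : IsClosed {η | 𝓕 (fun x : ℝ => L x) η = 0} :=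
    isClosed_eq (VectorFourier.fourierIntegral_continuous Real.continuous_fourierChar
      continuous_inner hL1) continuous_const
  have hstrict : {η | τ / (2 * π) < |η|} ⊆ {η | 𝓕 (fun x : ℝ => L x) η = 0} := fun η hη =>
    htype.fourier_eq_zero_of_lt_abs hL hM hL1 hη
  rcases le_abs'.1 hξ with h | h
  · have hIio : Iio (-(τ / (2 * π))) ⊆ {η | 𝓕 (fun x : ℝ => L x) η = 0} := fun η hη =>
      hstrict ((lt_neg_of_lt_neg hη).trans_le (neg_le_abs η))
    exact closure_minimal hIio hZ (by rwa [closure_Iio])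
  · have hIoi : Ioi (τ / (2 * π)) ⊆ {η | 𝓕 (fun x : ℝ => L x) η = 0} := fun η hη =>
      hstrict ((mem_Ioi.1 hη).trans_le (le_abs_self η))
    exact closure_minimal hIoi hZ (by rwa [closure_Ioi])

end ExpTypeLE

theorem Int.finite_setOf_abs_cast_lt (c : ℝ) : {k : ℤ | |(k : ℝ)| < c}.Finite :=
  (finite_Icc (-⌈c⌉) ⌈c⌉).subset fun k (hk : |(k : ℝ)| < c) => mem_Icc.2 <| abs_le.1 <|
    Int.cast_le (R := ℝ).1 <| by push_cast; exact hk.le.trans (Int.le_ceil c)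

/-- Let `L : ℂ → ℂ` be an entire function of exponential type at most
`τ` with `L` and `L'` both integrable on `ℝ`.  Then the periodization `Σ_{n∈ℤ} L(x+n)`
converges for every real `x` and equals the trigonometric polynomial
`Σ_{|k| < τ/(2π)} L̂(k) e(kx)`, where `L̂(t) = ∫ L(x) e(-tx) dx`. -/
theorem stmt18 (τ : ℝ) (L : ℂ → ℂ) (hL : Differentiable ℂ L)
    (htype : ExpTypeLE L τ)
    (hL1 : MeasureTheory.Integrable (fun x : ℝ => L x))
    (hL'1 : MeasureTheory.Integrable (fun x : ℝ => deriv L x)) :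
    ∀ x : ℝ, Summable (fun n : ℤ => L ((x : ℂ) + (n : ℂ))) ∧
      (∑' n : ℤ, L ((x : ℂ) + (n : ℂ))) =
        ∑' k : ℤ, (if |(k : ℝ)| < τ / (2 * Real.pi) then
          (∫ t : ℝ, L t * Complex.exp (-(2 * Real.pi * Complex.I * k * t))) *
            Complex.exp (2 * Real.pi * Complex.I * k * x) else 0) := by
  intro x
  set f : C(ℝ, ℂ) := ⟨fun t : ℝ => L t, hL.continuous.comp continuous_ofReal⟩
  have hf' : ∀ t : ℝ, HasDerivAt f (deriv L t) t := fun t => (hL t).hasDerivAt.comp_ofReal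
  have h_norm := summable_norm_restrict_comp_addRight hf' hL1 hL'1
  have hvanish : ∀ k : ℤ, τ / (2 * π) ≤ |(k : ℝ)| → 𝓕 (f : ℝ → ℂ) k = 0 := fun k =>
    htype.fourier_eq_zero hL (norm_le_integral_norm_add_norm_deriv hf' hL1 hL'1) hL1
  have h_sum : Summable fun k : ℤ => 𝓕 (f : ℝ → ℂ) k :=
    summable_of_hasFiniteSupport <| (Int.finite_setOf_abs_cast_lt _).subset fun k hk =>
      not_le.1 fun h => hk (hvanish k h)
  have hper :=
    ContinuousMap.hasSum_apply (ContinuousMap.summable_of_locally_summable_norm h_norm).hasSum x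
  have hfx : (fun n : ℤ => f (x + n)) = fun n : ℤ => L ((x : ℂ) + (n : ℂ)) := by
    ext n; simp [f]
  simp only [ContinuousMap.comp_apply, ContinuousMap.coe_addRight, hfx] at hper
  refine ⟨hper.summable, ?_⟩
  rw [← hfx, Real.tsum_eq_tsum_fourier h_norm h_sum x]
  refine tsum_congr fun k => ?_
  split_ifs with hk
  · rw [fourier_eq_integral_mul_cexp, fourier_coe_apply]
    push_cast
    rw [div_one]
    rfl
  · rw [hvanish k (not_lt.1 hk), zero_mul]
end
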